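/- Completion preserves and extends the requirement language while making uncontrollable events complete: for a TA R with uncontrollable events Σuc, the completed automaton R⊥ satisfies (1) L(R) ⊆ L(R⊥), and (2) for every state (q,u) of R⊥ with q ≠ qd and every uncontrollable event σ ∈ Σuc such that some edge of R labeled σ leaves q, there is a σ-labeled transition enabled at (q,u) in the semantic graph of R⊥ (either an original edge of R or the added dump edge with guard g⊥ = ¬⋁(g ∧ I(qt)[r]) over the original σ-edges from q). -/

import Mathlib

inductive CC (C : Type) : Type where
  | lt (x : C) (n : ℕ)
  | eq (x : C) (n : ℕ)
  | gt (x : C) (n : ℕ)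
  | dlt (x y : C) (n : ℕ)
  | deq (x y : C) (n : ℕ)
  | dgt (x y : C) (n : ℕ)
  | and (φ ψ : CC C)
  | or (φ ψ : CC C)

/-- Satisfaction of a clock constraint by a clock valuation `u : C → ℝ≥0`. -/
def sat {C : Type} (u : C → NNReal) : CC C → Prop
  | .lt x n => (u x : ℝ) < n
  | .eq x n => (u x : ℝ) = n
  | .gt x n => (u x : ℝ) > n
  | .dlt x y n => (u x : ℝ) - (u y : ℝ) < n
  | .deq x y n => (u x : ℝ) - (u y : ℝ) = n
  | .dgt x y n => (u x : ℝ) - (u y : ℝ) > n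
  | .and φ ψ => sat u φ ∧ sat u ψ
  | .or φ ψ => sat u φ ∨ sat u ψ

/-- `shift u δ` increases every clock by `δ`. -/
def shift {C : Type} (u : C → NNReal) (δ : NNReal) : C → NNReal := fun x => u x + δ

open Classical in
/-- `resetVal u r` maps clocks in `r` to `0` and agrees with `u` elsewhere. -/
noncomputable def resetVal {C : Type} (u : C → NNReal) (r : Set C) : C → NNReal :=
  fun x => if x ∈ r then 0 else u x

/-- `Bounded k φ`: all bounds in atomic constraints are at most the clock ceilings,
i.e. `φ` is a `G`-clock constraint. -/
def Bounded {C : Type} (k : C → ℕ) : CC C → Prop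
  | .lt x n => n ≤ k x
  | .eq x n => n ≤ k x
  | .gt x n => n ≤ k x
  | .dlt x _ n => n ≤ k x
  | .deq x _ n => n ≤ k x
  | .dgt x _ n => n ≤ k x
  | .and φ ψ => Bounded k φ ∧ Bounded k ψ
  | .or φ ψ => Bounded k φ ∧ Bounded k ψ

/-- An edge of a timed automaton with a semantic guard (a predicate on valuations). -/
structure SEdge (C Q A : Type) where
  src : Q
  ev : A
  guard : (C → NNReal) → Prop
  reset : Set C
  tgt : Q

/-- A timed automaton with semantic guards and invariants. -/
structure STA (C Q A : Type) where
  edges : Set (SEdge C Q A)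
  marked : Set Q
  init : Q
  inv : Q → (C → NNReal) → Prop

/-- One transition of the semantic graph. -/
def SStep {C Q A : Type} (G : STA C Q A) (s : Q × (C → NNReal)) :
    (A ⊕ NNReal) → (Q × (C → NNReal)) → Prop
  | Sum.inl a, t =>
      G.inv s.1 s.2 ∧ ∃ e ∈ G.edges, e.src = s.1 ∧ e.ev = a ∧ e.guard s.2 ∧
        t.1 = e.tgt ∧ t.2 = resetVal s.2 e.reset ∧ G.inv e.tgt t.2
  | Sum.inr Δ, t =>
      t.1 = s.1 ∧ t.2 = shift s.2 Δ ∧ ∀ δ ≤ Δ, G.inv s.1 (shift s.2 δ)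

/-- Paths labelled by words over Σ ∪ ℝ≥0. -/
inductive SPath {C Q A : Type} (G : STA C Q A) :
    (Q × (C → NNReal)) → List (A ⊕ NNReal) → (Q × (C → NNReal)) → Prop
  | nil (s) : SPath G s [] s
  | cons {s t u : Q × (C → NNReal)} {a : A ⊕ NNReal} {w : List (A ⊕ NNReal)} :
      SStep G s a t → SPath G t w u → SPath G s (a :: w) u

/-- The language of an STA. -/
def SLang {C Q A : Type} (G : STA C Q A) : Set (List (A ⊕ NNReal)) :=
  {w | G.inv G.init (fun _ => 0) ∧ ∃ s, SPath G (G.init, fun _ => 0) w s}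

/-- Completion R⊥ of a requirement automaton R: add a dump location qd (= none) with
invariant true, and for every location q and uncontrollable event σ with some σ-edge
from q, a dump edge (q, σ, g⊥, ∅, qd) with
g⊥ = ¬⋁ over σ-edges e from q of (e.guard ∧ I(e.tgt)[e.reset]). -/
def completion {C Q A : Type} (R : STA C Q A) (Suc : Set A) : STA C (Option Q) A where
  edges :=
    {e : SEdge C (Option Q) A |
      (∃ e₀ ∈ R.edges, e = ⟨some e₀.src, e₀.ev, e₀.guard, e₀.reset, some e₀.tgt⟩) ∨
      (∃ q : Q, ∃ σ ∈ Suc, (∃ e₀ ∈ R.edges, e₀.src = q ∧ e₀.ev = σ) ∧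
        e = ⟨some q, σ,
              fun u => ¬ ∃ e₀ ∈ R.edges, e₀.src = q ∧ e₀.ev = σ ∧ e₀.guard u ∧
                R.inv e₀.tgt (resetVal u e₀.reset),
              (∅ : Set C), none⟩)}
  marked := some '' R.marked
  init := some R.init
  inv := fun l u => match l with
    | none => True
    | some q => R.inv q u

/-! The completion only adds edges and a fresh location, so every run of `R` is a run of `R⊥`
through the embedding `some`. For enabledness of `σ` at `(q, u)`: either some original
`σ`-edge from `q` is enabled (its guard and the target invariant after reset hold at `u`),
or none is, and then `u` satisfies the dump guard `g⊥` by construction; the dump edge resets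
nothing and targets `qd`, whose invariant is `True`. -/

variable {C Q A : Type}

def SEdge.liftSome (e : SEdge C Q A) : SEdge C (Option Q) A :=
  ⟨some e.src, e.ev, e.guard, e.reset, some e.tgt⟩

namespace completion

variable (R : STA C Q A) (Suc : Set A)

lemma liftSome_mem_edges {e : SEdge C Q A} (he : e ∈ R.edges) :
    e.liftSome ∈ (completion R Suc).edges :=
  Or.inl ⟨e, he, rfl⟩

lemma sStep_some {s t : Q × (C → NNReal)} {a : A ⊕ NNReal} (h : SStep R s a t) :
    SStep (completion R Suc) (some s.1, s.2) a (some t.1, t.2) := by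
  cases a with
  | inl σ =>
    obtain ⟨hinv, e, he, hsrc, hev, hg, ht1, ht2, hinvt⟩ := h
    exact ⟨hinv, e.liftSome, liftSome_mem_edges R Suc he, congrArg some hsrc, hev, hg,
      congrArg some ht1, ht2, ht2 ▸ hinvt⟩
  | inr Δ =>
    obtain ⟨ht1, ht2, hinv⟩ := h
    exact ⟨congrArg some ht1, ht2, hinv⟩

lemma sPath_some {s t : Q × (C → NNReal)} {w : List (A ⊕ NNReal)} (h : SPath R s w t) :
    SPath (completion R Suc) (some s.1, s.2) w (some t.1, t.2) := by
  induction h with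
  | nil s => exact .nil _
  | cons hstep _ ih => exact .cons (sStep_some R Suc hstep) ih

theorem sLang_subset : SLang R ⊆ SLang (completion R Suc) := by
  rintro w ⟨hinv, t, hpath⟩
  exact ⟨hinv, (some t.1, t.2), sPath_some R Suc hpath⟩

theorem exists_sStep_of_uncontrollable {q : Q} {u : C → NNReal} (hinv : R.inv q u) {σ : A} (hσ : σ ∈ Suc)
    (hedge : ∃ e ∈ R.edges, e.src = q ∧ e.ev = σ) :
    ∃ t, SStep (completion R Suc) (some q, u) (Sum.inl σ) t := by
  by_cases henabled : ∃ e ∈ R.edges, e.src = q ∧ e.ev = σ ∧ e.guard u ∧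
      R.inv e.tgt (resetVal u e.reset)
  · obtain ⟨e, he, hsrc, hev, hg, hinvt⟩ := henabled
    exact ⟨(some e.tgt, resetVal u e.reset), hinv, e.liftSome, liftSome_mem_edges R Suc he,
      congrArg some hsrc, hev, hg, rfl, rfl, hinvt⟩
  · exact ⟨(none, resetVal u ∅), hinv, _, Or.inr ⟨q, σ, hσ, hedge, rfl⟩,
      rfl, rfl, henabled, rfl, rfl, trivial⟩

end completion

/-- Completion preserves the requirement language and makes uncontrollable events
complete: (1) L(R) ⊆ L(R⊥); (2) at every non-dump state of R⊥, each uncontrollable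
event having some edge of R from that location is enabled in R⊥. -/
theorem completion_properties {C Q A : Type} (R : STA C Q A) (Suc : Set A) :
    SLang R ⊆ SLang (completion R Suc) ∧
    (∀ (q : Q) (u : C → NNReal), R.inv q u →
      ∀ σ ∈ Suc, (∃ e ∈ R.edges, e.src = q ∧ e.ev = σ) →
      ∃ t, SStep (completion R Suc) (some q, u) (Sum.inl σ) t) :=
  ⟨completion.sLang_subset R Suc,
    fun _ _ hinv _ hσ hedge => completion.exists_sStep_of_uncontrollable R Suc hinv hσ hedge⟩
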